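/- arXiv:2101.01363 — 3 statements merged into one kernel-verified Lean document; each statement's English description precedes it below -/
import Mathlib

section
/- The Jaccard distance on finite sets, J(A,B) = 1 - |A ∩ B| / |A ∪ B| (with J(∅,∅) = 0), satisfies the triangle inequality: J(A,C) ≤ J(A,B) + J(B,C) for all finite sets A, B, C. -/
open Finset
open scoped symmDiff

/-- Jaccard distance on finite sets. -/
noncomputable def jaccard {α : Type*} [DecidableEq α] (A B : Finset α) : ℝ :=
  if (A ∪ B) = ∅ then 0 else 1 - ((A ∩ B).card : ℝ) / ((A ∪ B).card : ℝ)

lemma jaccard_nonneg {α : Type*} [DecidableEq α] (A B : Finset α) : 0 ≤ jaccard A B := by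
  unfold jaccard
  split
  · exact le_refl 0
  · rename_i h
    have hpos : 0 < ((A ∪ B).card : ℝ) := by
      exact_mod_cast card_pos.mpr (nonempty_of_ne_empty h)
    have hle : ((A ∩ B).card : ℝ) ≤ ((A ∪ B).card : ℝ) := by
      exact_mod_cast card_le_card (inter_subset_union)
    have := div_le_one_of_le₀ hle (le_of_lt hpos)
    linarith

lemma key_ineq (x y z r p q : ℝ) (hx : 0 ≤ x) (hy : 0 ≤ y) (hr : 0 ≤ r)
    (hzxy : z ≤ x + y) (hp : p ≤ r + y) (hq : q ≤ r + x)
    (hzr : 0 < z + r) (hxp : 0 < x + p) (hyq : 0 < y + q) :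
    z / (z + r) ≤ x / (x + p) + y / (y + q) := by
  have hxyr : 0 < x + y + r := by nlinarith
  have h1 : z / (z + r) ≤ (x + y) / (x + y + r) := by
    rw [div_le_div_iff₀ hzr hxyr]; nlinarith
  have h2 : x / (x + y + r) ≤ x / (x + p) := by
    rcases eq_or_lt_of_le hx with h | h
    · simp [← h]
    · apply div_le_div_of_nonneg_left hx hxp; linarith
  have h3 : y / (x + y + r) ≤ y / (y + q) := by
    rcases eq_or_lt_of_le hy with h | h
    · simp [← h]
    · apply div_le_div_of_nonneg_left hy hyq; linarith
  have h4 : (x + y) / (x + y + r) = x / (x + y + r) + y / (x + y + r) := by ring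
  linarith

/-- The Jaccard distance on finite sets satisfies the triangle inequality. -/
theorem jaccard_triangle {α : Type*} [DecidableEq α] (A B C : Finset α) :
    jaccard A C ≤ jaccard A B + jaccard B C := by
  by_cases hAC : (A ∪ C) = ∅
  · have h1 : jaccard A C = 0 := by simp [jaccard, hAC]
    rw [h1]
    exact add_nonneg (jaccard_nonneg A B) (jaccard_nonneg B C)
  by_cases hAB : (A ∪ B) = ∅
  · obtain ⟨hA, hB⟩ := union_eq_empty.mp hAB
    subst hA; subst hB
    simp [jaccard]
  by_cases hBC : (B ∪ C) = ∅
  · obtain ⟨hB, hC⟩ := union_eq_empty.mp hBC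
    subst hB; subst hC
    simp [jaccard] at hAC ⊢
  -- main case
  have huAB : 0 < ((A ∪ B).card : ℝ) := by
    exact_mod_cast card_pos.mpr (nonempty_of_ne_empty hAB)
  have huBC : 0 < ((B ∪ C).card : ℝ) := by
    exact_mod_cast card_pos.mpr (nonempty_of_ne_empty hBC)
  have huAC : 0 < ((A ∪ C).card : ℝ) := by
    exact_mod_cast card_pos.mpr (nonempty_of_ne_empty hAC)
  -- symmetric difference cardinalities
  have hsd : ∀ X Y : Finset α, (X ∆ Y).card + (X ∩ Y).card = (X ∪ Y).card := by
    intro X Y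
    have h1 : X ∆ Y = (X ∪ Y) \ (X ∩ Y) := by
      rw [symmDiff_eq_sup_sdiff_inf (a := X) (b := Y), sup_eq_union, inf_eq_inter]
    rw [h1, card_sdiff_add_card_eq_card (inter_subset_union)]
  have hsdAB := hsd A B
  have hsdBC := hsd B C
  have hsdAC := hsd A C
  -- triangle for symmetric difference
  have htri : (A ∆ C).card ≤ (A ∆ B).card + (B ∆ C).card := by
    calc (A ∆ C).card ≤ ((A ∆ B) ∪ (B ∆ C)).card := by
          apply card_le_card
          intro a ha
          simp only [mem_symmDiff] at ha
          simp only [mem_union, mem_symmDiff]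
          by_cases hb : a ∈ B <;> tauto
      _ ≤ (A ∆ B).card + (B ∆ C).card := card_union_le _ _
  -- intersection inequalities
  have hintAB : (A ∩ B).card ≤ (A ∩ C).card + (B ∆ C).card := by
    calc (A ∩ B).card ≤ ((A ∩ C) ∪ (B ∆ C)).card := by
          apply card_le_card
          intro a ha
          simp only [mem_inter] at ha
          simp only [mem_union, mem_inter, mem_symmDiff]
          by_cases hc : a ∈ C <;> tauto
      _ ≤ (A ∩ C).card + (B ∆ C).card := card_union_le _ _
  have hintBC : (B ∩ C).card ≤ (A ∩ C).card + (A ∆ B).card := by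
    calc (B ∩ C).card ≤ ((A ∩ C) ∪ (A ∆ B)).card := by
          apply card_le_card
          intro a ha
          simp only [mem_inter] at ha
          simp only [mem_union, mem_inter, mem_symmDiff]
          by_cases hc : a ∈ A <;> tauto
      _ ≤ (A ∩ C).card + (A ∆ B).card := card_union_le _ _
  have cAB : ((A ∆ B).card : ℝ) + ((A ∩ B).card : ℝ) = ((A ∪ B).card : ℝ) := by
    exact_mod_cast hsdAB
  have cBC : ((B ∆ C).card : ℝ) + ((B ∩ C).card : ℝ) = ((B ∪ C).card : ℝ) := by
    exact_mod_cast hsdBC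
  have cAC : ((A ∆ C).card : ℝ) + ((A ∩ C).card : ℝ) = ((A ∪ C).card : ℝ) := by
    exact_mod_cast hsdAC
  have hform : ∀ (X Y : Finset α), (X ∪ Y) ≠ ∅ →
      jaccard X Y = 1 - ((X ∩ Y).card : ℝ) / ((X ∪ Y).card : ℝ) := by
    intro X Y h; simp [jaccard, h]
  have eform : ∀ (X Y : Finset α), 0 < ((X ∪ Y).card : ℝ) →
      ((X ∆ Y).card : ℝ) + ((X ∩ Y).card : ℝ) = ((X ∪ Y).card : ℝ) →
      (1 : ℝ) - ((X ∩ Y).card : ℝ) / ((X ∪ Y).card : ℝ)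
        = ((X ∆ Y).card : ℝ) / (((X ∆ Y).card : ℝ) + ((X ∩ Y).card : ℝ)) := by
    intro X Y hu hc
    rw [hc, eq_div_iff (ne_of_gt hu), sub_mul, one_mul,
      div_mul_cancel₀ _ (ne_of_gt hu)]
    linarith
  rw [hform A C hAC, hform A B hAB, hform B C hBC,
    eform A C huAC cAC, eform A B huAB cAB, eform B C huBC cBC]
  apply key_ineq
  · positivity
  · positivity
  · positivity
  · exact_mod_cast htri
  · exact_mod_cast hintAB
  · exact_mod_cast hintBC
  · rw [cAC]; exact huAC
  · rw [cAB]; exact huAB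
  · rw [cBC]; exact huBC
end

section
/- Greedy set cover approximation bound: for unweighted set cover over a universe of n elements, the greedy algorithm that repeatedly picks the set covering the most uncovered elements returns a cover of size at most H(n) times the optimum, where H(n) = 1 + 1/2 + ... + 1/n is the n-th harmonic number. -/
open Finset

/-- The union of the prefix of chosen sets. -/
def covPrefix {α : Type*} [DecidableEq α] (L : List (Finset α)) (i : ℕ) : Finset α :=
  (L.take i).foldr (· ∪ ·) ∅

lemma foldr_union_eq {α : Type*} [DecidableEq α] (xs : List (Finset α)) (b : Finset α) :
    xs.foldr (· ∪ ·) b = xs.foldr (· ∪ ·) ∅ ∪ b := by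
  induction xs with
  | nil => simp
  | cons a t ih => simp [ih, union_assoc]

lemma covPrefix_succ {α : Type*} [DecidableEq α] (L : List (Finset α)) (i : ℕ)
    (h : i < L.length) :
    covPrefix L (i+1) = covPrefix L i ∪ L.getD i ∅ := by
  unfold covPrefix
  rw [List.take_succ, List.foldr_append, foldr_union_eq]
  congr 1
  rw [List.getElem?_eq_getElem h]
  simp [List.getD_eq_getElem?_getD, List.getElem?_eq_getElem h]

noncomputable def harm (m : ℕ) : ℝ := ∑ j ∈ Finset.range m, (1:ℝ)/(j+1)

lemma harm_nonneg (m : ℕ) : 0 ≤ harm m := by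
  unfold harm; positivity

lemma harm_step (a c : ℕ) (_hc : 0 < c) :
    (c : ℝ) / (a + c) + harm a ≤ harm (a + c) := by
  unfold harm
  have h1 : ∑ j ∈ Finset.range (a+c), (1:ℝ)/(j+1)
      = (∑ j ∈ Finset.Ico a (a+c), (1:ℝ)/(j+1)) + ∑ j ∈ Finset.range a, (1:ℝ)/(j+1) := by
    rw [Finset.range_eq_Ico, ← Finset.sum_Ico_consecutive _ (Nat.zero_le a) (Nat.le_add_right a c),
      ← Finset.range_eq_Ico, add_comm]
  rw [h1]
  gcongr
  have h2 : (c:ℝ)/(a+c) = ∑ _j ∈ Finset.Ico a (a+c), (1:ℝ)/(a+c) := by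
    rw [Finset.sum_const, Nat.card_Ico, nsmul_eq_mul]
    push_cast [Nat.add_sub_cancel_left]
    ring
  rw [h2]
  apply Finset.sum_le_sum
  intro j hj
  have hj' := (Finset.mem_Ico.mp hj).2
  have hja : (j:ℝ) + 1 ≤ (a:ℝ) + c := by exact_mod_cast hj'
  have : (0:ℝ) < (j:ℝ) + 1 := by positivity
  exact one_div_le_one_div_of_le this hja

/-- Greedy set cover approximation bound: any run of the greedy algorithm
(each chosen set maximizes the number of newly covered elements, and covers
at least one new element) on a universe of `n ≥ 1` elements uses at most
`H n · OPT` sets, where `OPT` is the size of any cover. -/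
theorem greedy_set_cover_harmonic_bound
    {α : Type*} [DecidableEq α]
    (U : Finset α) (F : Finset (Finset α)) (n : ℕ)
    (hn : U.card = n) (hn1 : 1 ≤ n)
    (hF : F.biUnion id = U)
    (L : List (Finset α))
    (hmemL : ∀ S ∈ L, S ∈ F)
    (hnew : ∀ i, i < L.length → ((L.getD i ∅) \ covPrefix L i).Nonempty)
    (hgreedy : ∀ i, i < L.length → ∀ S ∈ F,
      (S \ covPrefix L i).card ≤ ((L.getD i ∅) \ covPrefix L i).card)
    (hcovers : covPrefix L L.length = U)
    (O : Finset (Finset α)) (hO : O ⊆ F) (hOcov : O.biUnion id = U) :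
    (L.length : ℝ) ≤ (∑ i ∈ Finset.range n, (1 : ℝ) / (i + 1)) * O.card := by
  set k := O.card with hk
  set u : ℕ → ℕ := fun i => (U \ covPrefix L i).card with hu
  -- every member of F is a subset of U
  have hsubU : ∀ S ∈ F, S ⊆ U := by
    intro S hS x hx
    rw [← hF]
    exact Finset.mem_biUnion.mpr ⟨S, hS, hx⟩
  have hTmem : ∀ i, i < L.length → L.getD i ∅ ∈ F := by
    intro i h
    have : L.getD i ∅ = L[i] := by
      simp [List.getD_eq_getElem?_getD, List.getElem?_eq_getElem h]
    rw [this]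
    exact hmemL _ (List.getElem_mem h)
  -- step facts
  have hstep : ∀ i, i < L.length →
      u i = u (i+1) + ((L.getD i ∅) \ covPrefix L i).card ∧
      u i ≤ k * ((L.getD i ∅) \ covPrefix L i).card := by
    intro i h
    set T := L.getD i ∅ with hT
    set P := covPrefix L i with hP
    have hTU : T ⊆ U := hsubU T (hTmem i h)
    have hsucc : covPrefix L (i+1) = P ∪ T := covPrefix_succ L i h
    constructor
    · -- cardinality split
      have hset : U \ P = (T \ P) ∪ (U \ (P ∪ T)) := by
        ext x
        simp only [Finset.mem_sdiff, Finset.mem_union]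
        constructor
        · rintro ⟨hxU, hxP⟩
          by_cases hxT : x ∈ T
          · exact Or.inl ⟨hxT, hxP⟩
          · exact Or.inr ⟨hxU, fun h' => h'.elim hxP hxT⟩
        · rintro (⟨hxT, hxP⟩ | ⟨hxU, hxPT⟩)
          · exact ⟨hTU hxT, hxP⟩
          · exact ⟨hxU, fun h' => hxPT (Or.inl h')⟩
      have hdisj : Disjoint (T \ P) (U \ (P ∪ T)) := by
        rw [Finset.disjoint_left]
        intro x hx1 hx2
        exact (Finset.mem_sdiff.mp hx2).2
          (Finset.mem_union_right _ (Finset.mem_sdiff.mp hx1).1)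
      have : (U \ P).card = (T \ P).card + (U \ (P ∪ T)).card := by
        rw [hset, Finset.card_union_of_disjoint hdisj]
      simp only [hu]
      rw [hsucc, ← hP]
      omega
    · -- greedy count bound
      set R := U \ P with hR
      have hRsub : R ⊆ O.biUnion (fun S => S ∩ R) := by
        intro x hx
        have hxU : x ∈ U := (Finset.mem_sdiff.mp hx).1
        rw [← hOcov] at hxU
        obtain ⟨S, hS, hxS⟩ := Finset.mem_biUnion.mp hxU
        exact Finset.mem_biUnion.mpr ⟨S, hS, Finset.mem_inter.mpr ⟨hxS, hx⟩⟩
      calc u i = R.card := rfl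
        _ ≤ (O.biUnion (fun S => S ∩ R)).card := Finset.card_le_card hRsub
        _ ≤ ∑ S ∈ O, (S ∩ R).card := Finset.card_biUnion_le
        _ ≤ ∑ S ∈ O, (T \ P).card := by
            apply Finset.sum_le_sum
            intro S hS
            have h1 : S ∩ R ⊆ S \ P := by
              intro x hx
              have := Finset.mem_inter.mp hx
              have := Finset.mem_sdiff.mp this.2
              exact Finset.mem_sdiff.mpr ⟨(Finset.mem_inter.mp hx).1, this.2⟩
            exact le_trans (Finset.card_le_card h1) (hgreedy i h S (hO hS))
        _ = k * (T \ P).card := by rw [Finset.sum_const, smul_eq_mul]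
  -- main induction
  have key : ∀ d i, i + d = L.length → (d : ℝ) ≤ (k : ℝ) * harm (u i) := by
    intro d
    induction d with
    | zero =>
      intro i _
      simpa using mul_nonneg (Nat.cast_nonneg k) (harm_nonneg (u i))
    | succ d ih =>
      intro i hi
      have hlt : i < L.length := by omega
      obtain ⟨heq, hku⟩ := hstep i hlt
      set c := ((L.getD i ∅) \ covPrefix L i).card with hc
      have hcpos : 0 < c := Finset.card_pos.mpr (hnew i hlt)
      set a := u (i+1) with ha
      have hIH : (d : ℝ) ≤ (k : ℝ) * harm a := ih (i+1) (by omega)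
      have hstepH : (c : ℝ) / (a + c) + harm a ≤ harm (a + c) := harm_step a c hcpos
      have hupos : (0:ℝ) < (a:ℝ) + c := by positivity
      have hkc : ((a:ℝ) + c) ≤ (k:ℝ) * c := by
        have : (u i : ℝ) ≤ (k:ℝ) * c := by exact_mod_cast hku
        rw [heq] at this
        push_cast at this
        linarith
      have h1 : (1:ℝ) ≤ (k:ℝ) * ((c:ℝ)/(a+c)) := by
        rw [mul_div_assoc']
        rw [le_div_iff₀ hupos]
        linarith
      have hknn : (0:ℝ) ≤ (k:ℝ) := Nat.cast_nonneg k
      have : (k:ℝ) * ((c:ℝ)/(a+c) + harm a) ≤ (k:ℝ) * harm (a + c) := by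
        exact mul_le_mul_of_nonneg_left hstepH hknn
      have hui : u i = a + c := heq
      rw [hui]
      push_cast [Nat.cast_add] at this ⊢
      nlinarith [mul_nonneg hknn (harm_nonneg a)]
  have hu0 : u 0 = n := by
    simp only [hu]
    have : covPrefix L 0 = ∅ := by simp [covPrefix]
    rw [this, Finset.sdiff_empty, hn]
  have := key L.length 0 (by omega)
  rw [hu0] at this
  have : (L.length : ℝ) ≤ (k:ℝ) * harm n := this
  unfold harm at this
  linarith [this, mul_comm (k:ℝ) (∑ i ∈ Finset.range n, (1:ℝ)/(i+1))]
end

section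
/- In the weighted set cover charging argument, for any single set S in an optimal solution and the greedy algorithm that always picks the set R maximizing |cover(R) ∩ uncovered| / Cost(R): the total price charged to elements of S (where each element is charged Cost(R)/(new elements covered by R) when first covered by greedy's choice R) is at most Cost(S)·H(|S|). -/
open Finset

/-- The set of elements newly covered at step `i`. -/
def newAt {α : Type*} [DecidableEq α] (L : List (Finset α)) (i : ℕ) : Finset α :=
  (L.getD i ∅) \ covPrefix L i

lemma mem_foldr_union {α : Type*} [DecidableEq α] (l : List (Finset α)) (a : α) :
    a ∈ l.foldr (· ∪ ·) ∅ ↔ ∃ T ∈ l, a ∈ T := by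
  induction l with
  | nil => simp
  | cons h t ih => simp [ih]

lemma covPrefix_mono {α : Type*} [DecidableEq α] (L : List (Finset α)) {i j : ℕ}
    (hij : i ≤ j) : covPrefix L i ⊆ covPrefix L j := by
  intro a ha
  rw [covPrefix, mem_foldr_union] at ha ⊢
  obtain ⟨T, hT, haT⟩ := ha
  refine ⟨T, ?_, haT⟩
  have : L.take i = (L.take j).take i := by
    rw [List.take_take, Nat.min_eq_left hij]
  rw [this] at hT
  exact List.take_subset _ _ hT

lemma harmonic_charge_bound {α : Type*} [DecidableEq α] (f : α → ℕ) :
    ∀ (n : ℕ) (S : Finset α), S.card = n →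
      ∑ e ∈ S, (1 : ℝ) / ((S.filter (fun e' => f e ≤ f e')).card) ≤
        ∑ i ∈ Finset.range n, (1 : ℝ) / (i + 1) := by
  intro n
  induction n with
  | zero => intro S hS; rw [Finset.card_eq_zero.mp hS]; simp
  | succ n ih =>
    intro S hS
    have hne : S.Nonempty := Finset.card_pos.mp (by omega)
    obtain ⟨e₀, he₀, hmin⟩ := S.exists_min_image f hne
    have hfilt : S.filter (fun e' => f e₀ ≤ f e') = S :=
      Finset.filter_eq_self.mpr (fun e he => hmin e he)
    have hcard' : (S.erase e₀).card = n := by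
      rw [Finset.card_erase_of_mem he₀, hS]; omega
    have key : ∀ e ∈ S.erase e₀,
        (1 : ℝ) / ((S.filter (fun e' => f e ≤ f e')).card) ≤
        (1 : ℝ) / (((S.erase e₀).filter (fun e' => f e ≤ f e')).card) := by
      intro e he
      have heS : e ∈ S := Finset.mem_of_mem_erase he
      have hpos : 0 < ((S.erase e₀).filter (fun e' => f e ≤ f e')).card := by
        apply Finset.card_pos.mpr
        exact ⟨e, Finset.mem_filter.mpr ⟨he, le_refl _⟩⟩
      have hsub : (S.erase e₀).filter (fun e' => f e ≤ f e') ⊆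
          S.filter (fun e' => f e ≤ f e') :=
        Finset.filter_subset_filter _ (Finset.erase_subset _ _)
      have hle := Finset.card_le_card hsub
      apply one_div_le_one_div_of_le
      · exact_mod_cast hpos
      · exact_mod_cast hle
    calc ∑ e ∈ S, (1 : ℝ) / ((S.filter (fun e' => f e ≤ f e')).card)
        = (1 : ℝ) / ((S.filter (fun e' => f e₀ ≤ f e')).card) +
          ∑ e ∈ S.erase e₀, (1 : ℝ) / ((S.filter (fun e' => f e ≤ f e')).card) :=
          (Finset.add_sum_erase S _ he₀).symm
      _ ≤ (1 : ℝ) / (n + 1) +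
          ∑ e ∈ S.erase e₀, (1 : ℝ) / (((S.erase e₀).filter (fun e' => f e ≤ f e')).card) := by
          apply add_le_add
          · rw [hfilt, hS]; push_cast [Nat.cast_add]; exact le_rfl
          · exact Finset.sum_le_sum key
      _ ≤ (1 : ℝ) / (n + 1) + ∑ i ∈ Finset.range n, (1 : ℝ) / (i + 1) :=
          add_le_add le_rfl (ih (S.erase e₀) hcard')
      _ = ∑ i ∈ Finset.range (n + 1), (1 : ℝ) / (i + 1) := by
          rw [Finset.sum_range_succ]; push_cast; ring

/-- Weighted greedy set cover charging lemma: for any set `S` of an optimal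
solution, the total price charged to the elements of `S` (each element is
charged `Cost R / #new` when first covered by greedy's choice `R`) is at most
`Cost S · H(|S|)`. -/
theorem greedy_weighted_charging
    {α : Type*} [DecidableEq α]
    (U : Finset α) (F : Finset (Finset α)) (Cost : Finset α → ℝ)
    (hCost : ∀ T ∈ F, 0 < Cost T)
    (hFsub : ∀ T ∈ F, T ⊆ U)
    (L : List (Finset α))
    (hmemL : ∀ T ∈ L, T ∈ F)
    (hnew : ∀ i, i < L.length → (newAt L i).Nonempty)
    (hgreedy : ∀ i, i < L.length → ∀ T ∈ F, (T \ covPrefix L i).Nonempty →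
      Cost (L.getD i ∅) / (newAt L i).card ≤
        Cost T / (T \ covPrefix L i).card)
    (hcovers : covPrefix L L.length = U)
    (step : α → ℕ)
    (hstep : ∀ e ∈ U, step e < L.length ∧ e ∈ newAt L (step e))
    (O : Finset (Finset α)) (hO : O ⊆ F) (hOcov : O.biUnion id = U)
    (hOopt : ∀ O' ⊆ F, O'.biUnion id = U →
      ∑ T ∈ O, Cost T ≤ ∑ T ∈ O', Cost T)
    (S : Finset α) (hS : S ∈ O) :
    ∑ e ∈ S, Cost (L.getD (step e) ∅) / (newAt L (step e)).card ≤
      Cost S * ∑ i ∈ Finset.range S.card, (1 : ℝ) / (i + 1) := by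
  have hSF : S ∈ F := hO hS
  have hCS : 0 < Cost S := hCost S hSF
  have hSU : S ⊆ U := fun a ha => hOcov ▸ Finset.mem_biUnion.mpr ⟨S, hS, ha⟩
  -- per-element bound
  have hmain : ∀ e ∈ S,
      Cost (L.getD (step e) ∅) / (newAt L (step e)).card ≤
      Cost S * ((1 : ℝ) / ((S.filter (fun e' => step e ≤ step e')).card)) := by
    intro e he
    obtain ⟨hlt, hnew_e⟩ := hstep e (hSU he)
    have henotcov : e ∉ covPrefix L (step e) := (Finset.mem_sdiff.mp hnew_e).2
    have hne : (S \ covPrefix L (step e)).Nonempty :=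
      ⟨e, Finset.mem_sdiff.mpr ⟨he, henotcov⟩⟩
    have h1 := hgreedy (step e) hlt S hSF hne
    -- filter ⊆ sdiff
    have hsub : S.filter (fun e' => step e ≤ step e') ⊆ S \ covPrefix L (step e) := by
      intro e' he'
      obtain ⟨he'S, hle⟩ := Finset.mem_filter.mp he'
      refine Finset.mem_sdiff.mpr ⟨he'S, fun hc => ?_⟩
      have := (Finset.mem_sdiff.mp (hstep e' (hSU he'S)).2).2
      exact this (covPrefix_mono L hle hc)
    have hpos : 0 < (S.filter (fun e' => step e ≤ step e')).card :=
      Finset.card_pos.mpr ⟨e, Finset.mem_filter.mpr ⟨he, le_refl _⟩⟩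
    have hle := Finset.card_le_card hsub
    have h2 : Cost S / ((S \ covPrefix L (step e)).card : ℝ) ≤
        Cost S / ((S.filter (fun e' => step e ≤ step e')).card : ℝ) := by
      apply div_le_div_of_nonneg_left hCS.le
      · exact_mod_cast hpos
      · exact_mod_cast hle
    calc Cost (L.getD (step e) ∅) / (newAt L (step e)).card
        ≤ Cost S / ((S \ covPrefix L (step e)).card : ℝ) := h1
      _ ≤ Cost S / ((S.filter (fun e' => step e ≤ step e')).card : ℝ) := h2
      _ = Cost S * ((1 : ℝ) / ((S.filter (fun e' => step e ≤ step e')).card)) := by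
          rw [mul_one_div]
  calc ∑ e ∈ S, Cost (L.getD (step e) ∅) / (newAt L (step e)).card
      ≤ ∑ e ∈ S, Cost S * ((1 : ℝ) / ((S.filter (fun e' => step e ≤ step e')).card)) :=
        Finset.sum_le_sum hmain
    _ = Cost S * ∑ e ∈ S, (1 : ℝ) / ((S.filter (fun e' => step e ≤ step e')).card) := by
        rw [Finset.mul_sum]
    _ ≤ Cost S * ∑ i ∈ Finset.range S.card, (1 : ℝ) / (i + 1) := by
        apply mul_le_mul_of_nonneg_left _ hCS.le
        exact harmonic_charge_bound step S.card S rfl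
end
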